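/- If ρ_AB = Σ_j p_j |ψ_j⟩⟨ψ_j| has decreasing eigenvalues p_j and U is any unitary, then Tr((I_A ⊗ |0⟩⟨0|_B) U ρ_AB U†) ≤ Σ_{j=1}^{d_A} p_j, where d_A = dim H_A; i.e., the optimal trash-state overlap is at most the sum of the d_A largest eigenvalues. -/

import Mathlib

open Matrix Kronecker Finset ComplexOrder

noncomputable section
namespace QAE

/-- Partial trace over the second tensor factor. -/
def ptraceB {A B : Type*} [Fintype B] (ρ : Matrix (A × B) (A × B) ℂ) : Matrix A A ℂ :=
  Matrix.of fun i j => ∑ k : B, ρ (i, k) (j, k)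

/-- Partial trace over the first tensor factor. -/
def ptraceA {A B : Type*} [Fintype A] (ρ : Matrix (A × B) (A × B) ℂ) : Matrix B B ℂ :=
  Matrix.of fun i j => ∑ k : A, ρ (k, i) (k, j)

/-- Outer product |v⟩⟨v|. -/
def outer {A : Type*} (v : A → ℂ) : Matrix A A ℂ := Matrix.vecMulVec v (star v)

/-- The positive semidefinite square root `U √D Uᴴ` (formerly `Matrix.PosSemidef.sqrt`). -/
def psdSqrt {n : Type*} [Fintype n] [DecidableEq n] {σ : Matrix n n ℂ} (hσ : σ.PosSemidef) :
    Matrix n n ℂ :=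
  (hσ.1.eigenvectorUnitary : Matrix n n ℂ) * diagonal ((↑) ∘ Real.sqrt ∘ hσ.1.eigenvalues) *
    (star hσ.1.eigenvectorUnitary : Matrix n n ℂ)

lemma psdSqrt_posSemidef {n : Type*} [Fintype n] [DecidableEq n] {σ : Matrix n n ℂ}
    (hσ : σ.PosSemidef) : (psdSqrt hσ).PosSemidef := by
  have hD : (diagonal ((↑) ∘ Real.sqrt ∘ hσ.1.eigenvalues : n → ℂ)).PosSemidef := by
    rw [posSemidef_diagonal_iff]
    intro i
    simp [Real.sqrt_nonneg]
  exact hD.mul_mul_conjTranspose_same (hσ.1.eigenvectorUnitary : Matrix n n ℂ)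

lemma sandwich_psd {n : Type*} [Fintype n] [DecidableEq n] {ρ σ : Matrix n n ℂ}
    (hρ : ρ.PosSemidef) (hσ : σ.PosSemidef) :
    (psdSqrt hσ * ρ * psdSqrt hσ).PosSemidef := by
  have h := hρ.mul_mul_conjTranspose_same (psdSqrt hσ)
  rwa [(psdSqrt_posSemidef hσ).isHermitian.eq] at h

-- Squared Uhlmann fidelity F(ρ,σ) = (Tr √(σ^{1/2} ρ σ^{1/2}))².
open Classical in
def sqFidelity {n : Type*} [Fintype n] [DecidableEq n] (ρ σ : Matrix n n ℂ) : ℝ :=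
  if h : ρ.PosSemidef ∧ σ.PosSemidef then
    ((psdSqrt (sandwich_psd h.1 h.2)).trace).re ^ 2
  else 0

/-- A density matrix: positive semidefinite with unit trace. -/
def IsDensity {n : Type*} [Fintype n] [DecidableEq n] (ρ : Matrix n n ℂ) : Prop :=
  ρ.PosSemidef ∧ ρ.trace = 1

end QAE
end

/-! Conjugating by `U` turns the trash projection `1 ⊗ |b₀⟩⟨b₀|` into an orthogonal projection `Q`
of trace `d_A`, and the overlap becomes `∑ p_j q_j` with `q_j = ⟨ψ_j|Q|ψ_j⟩ ∈ [0, 1]`. As the `ψ_j`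
are orthonormal, `∑ q_j = Tr (Q S) ≤ Tr Q = d_A`, where `S` projects onto their span. With `p`
decreasing, `∑ p_j q_j` under these constraints is largest when `q` is the indicator of the first
`d_A` indices. -/

open scoped MatrixOrder

theorem sum_mul_le_sum_of_threshold {ι : Type*} [Fintype ι] (s : Finset ι) {p q : ι → ℝ} {t : ℝ}
    (ht : 0 ≤ t) (hs : ∀ j ∈ s, t ≤ p j) (hsc : ∀ j ∉ s, p j ≤ t) (hq0 : ∀ j, 0 ≤ q j)
    (hq1 : ∀ j, q j ≤ 1) (hq : ∑ j, q j ≤ #s) : ∑ j, p j * q j ≤ ∑ j ∈ s, p j := by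
  classical
  -- termwise, `(p j - t) (q j - 1) ≤ 0` on `s` and `(p j - t) q j ≤ 0` off `s`
  have hterm (j : ι) :
      p j * q j ≤ (if j ∈ s then p j else 0) + t * (q j - if j ∈ s then 1 else 0) := by
    by_cases hj : j ∈ s
    · simp only [hj, if_true]
      nlinarith [hs j hj, hq1 j]
    · simp only [hj, if_false]
      nlinarith [hsc j hj, hq0 j]
  calc ∑ j, p j * q j
      ≤ ∑ j, ((if j ∈ s then p j else 0) + t * (q j - if j ∈ s then 1 else 0)) :=
        sum_le_sum fun j _ => hterm j
    _ = ∑ j ∈ s, p j + t * (∑ j, q j - #s) := by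
        rw [sum_add_distrib, ← Finset.mul_sum, sum_sub_distrib]
        simp
    _ ≤ ∑ j ∈ s, p j := by nlinarith

theorem sum_mul_le_sum_lt_of_antitone {k d : ℕ} {p q : Fin k → ℝ} (hp : Antitone p)
    (hp0 : ∀ j, 0 ≤ p j) (hq0 : ∀ j, 0 ≤ q j) (hq1 : ∀ j, q j ≤ 1) (hq : ∑ j, q j ≤ d) :
    ∑ j, p j * q j ≤ ∑ j ∈ Finset.univ.filter (fun j : Fin k => (j : ℕ) < d), p j := by
  have hcard : ∑ j, q j ≤ #{j : Fin k | (j : ℕ) < d} := by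
    rw [Fin.card_filter_val_lt, Nat.cast_min]
    refine le_min ?_ hq
    simpa using sum_le_sum fun j (_ : j ∈ Finset.univ) => hq1 j
  by_cases hd : d < k
  · refine sum_mul_le_sum_of_threshold _ (hp0 ⟨d, hd⟩) (fun j hj => hp ?_) (fun j hj => hp ?_)
      hq0 hq1 hcard
    · simp only [mem_filter, mem_univ, true_and] at hj
      exact Fin.le_def.mpr hj.le
    · simp only [mem_filter, mem_univ, true_and, not_lt] at hj
      exact Fin.le_def.mpr hj
  · refine sum_mul_le_sum_of_threshold _ le_rfl (fun j _ => hp0 j) (fun j hj => ?_) hq0 hq1 hcard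
    simp only [mem_filter, mem_univ, true_and] at hj
    omega

namespace IsStarProjection

theorem conjugate' {R : Type*} [Monoid R] [StarMul R] {p u : R} (hp : IsStarProjection p)
    (hu : u * star u = 1) : IsStarProjection (star u * p * u) where
  isIdempotentElem := by
    calc star u * p * u * (star u * p * u) = star u * (p * (u * star u) * p) * u := by
          simp only [mul_assoc]
      _ = star u * p * u := by rw [hu, mul_one, hp.isIdempotentElem.eq, mul_assoc]
  isSelfAdjoint := hp.isSelfAdjoint.conjugate' u

theorem kronecker {R m n : Type*} [CommSemiring R] [StarRing R] [Fintype m] [Fintype n]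
    {P : Matrix m m R} {Q : Matrix n n R} (hP : IsStarProjection P) (hQ : IsStarProjection Q) :
    IsStarProjection (P ⊗ₖ Q) where
  isIdempotentElem := by
    rw [IsIdempotentElem, ← mul_kronecker_mul, hP.isIdempotentElem.eq, hQ.isIdempotentElem.eq]
  isSelfAdjoint := by
    rw [IsSelfAdjoint, star_eq_conjTranspose, conjTranspose_kronecker,
      ← star_eq_conjTranspose, ← star_eq_conjTranspose, hP.isSelfAdjoint.star_eq,
      hQ.isSelfAdjoint.star_eq]

variable {n : Type*} [Fintype n] {Q : Matrix n n ℂ}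

theorem posSemidef (hQ : IsStarProjection Q) : Q.PosSemidef :=
  nonneg_iff_posSemidef.mp hQ.nonneg

theorem re_star_dotProduct_mulVec_nonneg (hQ : IsStarProjection Q) (v : n → ℂ) :
    0 ≤ (star v ⬝ᵥ (Q *ᵥ v)).re :=
  (Complex.nonneg_iff.mp (hQ.posSemidef.dotProduct_mulVec_nonneg v)).1

theorem re_star_dotProduct_mulVec_le_one [DecidableEq n] (hQ : IsStarProjection Q) {v : n → ℂ}
    (hv : star v ⬝ᵥ v = 1) : (star v ⬝ᵥ (Q *ᵥ v)).re ≤ 1 := by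
  have h := hQ.one_sub.re_star_dotProduct_mulVec_nonneg v
  rw [sub_mulVec, one_mulVec, dotProduct_sub, hv, Complex.sub_re, Complex.one_re] at h
  linarith

end IsStarProjection

theorem Matrix.PosSemidef.trace_mul_nonneg_of_isStarProjection {n : Type*} [Fintype n]
    {A P : Matrix n n ℂ} (hA : A.PosSemidef) (hP : IsStarProjection P) : 0 ≤ (A * P).trace :=
  calc 0 ≤ (Pᴴ * A * P).trace := (hA.conjTranspose_mul_mul_same P).trace_nonneg
    _ = (A * P).trace := by
      rw [← star_eq_conjTranspose, hP.isSelfAdjoint.star_eq, Matrix.mul_assoc,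
        trace_mul_comm, Matrix.mul_assoc, hP.isIdempotentElem.eq]

namespace QAE

variable {n : Type*} [Fintype n]

theorem trace_mul_outer (M : Matrix n n ℂ) (v : n → ℂ) :
    (M * outer v).trace = star v ⬝ᵥ (M *ᵥ v) := by
  rw [outer, mul_vecMulVec, trace_vecMulVec, dotProduct_comm]

theorem trace_outer (v : n → ℂ) : (outer v).trace = star v ⬝ᵥ v := by
  rw [outer, trace_vecMulVec, dotProduct_comm]

theorem isStarProjection_outer {v : n → ℂ} (hv : star v ⬝ᵥ v = 1) :
    IsStarProjection (outer v) where
  isIdempotentElem := by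
    rw [IsIdempotentElem, outer, vecMulVec_mul_vecMulVec, hv, one_smul]
  isSelfAdjoint := by
    rw [IsSelfAdjoint, outer, star_eq_conjTranspose, conjTranspose_vecMulVec, star_star]

variable {ι : Type*} [Fintype ι] [DecidableEq ι] {ψ : ι → n → ℂ}

theorem isStarProjection_sum_outer (hψ : ∀ i j, star (ψ i) ⬝ᵥ ψ j = if i = j then 1 else 0) :
    IsStarProjection (∑ j, outer (ψ j)) where
  isIdempotentElem := by
    simp only [IsIdempotentElem, sum_mul_sum, outer, vecMulVec_mul_vecMulVec, hψ,
      ite_smul, one_smul, zero_smul, apply_ite (Matrix.vecMulVec _), vecMulVec_zero,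
      sum_ite_eq, mem_univ, if_true]
  isSelfAdjoint := isSelfAdjoint_sum _ fun j _ =>
    (isStarProjection_outer (by simpa using hψ j j)).isSelfAdjoint

theorem sum_re_star_dotProduct_mulVec_le_re_trace [DecidableEq n] {Q : Matrix n n ℂ}
    (hQ : IsStarProjection Q) (hψ : ∀ i j, star (ψ i) ⬝ᵥ ψ j = if i = j then 1 else 0) :
    ∑ j, (star (ψ j) ⬝ᵥ (Q *ᵥ ψ j)).re ≤ Q.trace.re := by
  set S := ∑ j, outer (ψ j)
  have hsum : ∑ j, star (ψ j) ⬝ᵥ (Q *ᵥ ψ j) = Q.trace - (Q * (1 - S)).trace := by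
    simp only [Matrix.mul_sub, Matrix.mul_one, trace_sub, S, Matrix.mul_sum,
      trace_sum, trace_mul_outer, sub_sub_cancel]
  have hrest : 0 ≤ (Q * (1 - S)).trace := hQ.posSemidef.trace_mul_nonneg_of_isStarProjection
    (isStarProjection_sum_outer hψ).one_sub
  rw [← Complex.re_sum, hsum, Complex.sub_re]
  linarith [(Complex.nonneg_iff.mp hrest).1]

end QAE

theorem stmt9_general {A B : Type*} [Fintype A] [Fintype B] [DecidableEq A] [DecidableEq B]
    {k : ℕ} (p : Fin k → ℝ) (hpa : Antitone p) (hp0 : ∀ j, 0 ≤ p j)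
    (ψ : Fin k → (A × B) → ℂ)
    (hψ : ∀ i j, star (ψ i) ⬝ᵥ ψ j = if i = j then 1 else 0)
    (ρAB : Matrix (A × B) (A × B) ℂ) (hρ : ρAB = ∑ j, (p j : ℂ) • QAE.outer (ψ j))
    (U : Matrix (A × B) (A × B) ℂ) (hU : Uᴴ * U = 1 ∧ U * Uᴴ = 1)
    (b0 : B → ℂ) (hb0 : star b0 ⬝ᵥ b0 = 1) :
    ((((1 : Matrix A A ℂ) ⊗ₖ QAE.outer b0) * (U * ρAB * Uᴴ)).trace).re
      ≤ ∑ j ∈ Finset.univ.filter (fun j : Fin k => (j : ℕ) < Fintype.card A), p j := by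
  set P := (1 : Matrix A A ℂ) ⊗ₖ QAE.outer b0
  have hQ : IsStarProjection (Uᴴ * P * U) :=
    ((IsStarProjection.one _).kronecker (QAE.isStarProjection_outer hb0)).conjugate' hU.2
  have htrace : (Uᴴ * P * U).trace = Fintype.card A := by
    rw [Matrix.mul_assoc, trace_mul_comm, Matrix.mul_assoc, hU.2, Matrix.mul_one,
      trace_kronecker, trace_one, QAE.trace_outer, hb0, mul_one]
  have hoverlap : (P * (U * ρAB * Uᴴ)).trace.re
      = ∑ j, p j * (star (ψ j) ⬝ᵥ ((Uᴴ * P * U) *ᵥ ψ j)).re := by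
    rw [show P * (U * ρAB * Uᴴ) = P * U * ρAB * Uᴴ by simp only [Matrix.mul_assoc],
      trace_mul_comm, ← Matrix.mul_assoc, ← Matrix.mul_assoc, hρ, Matrix.mul_sum,
      trace_sum, Complex.re_sum]
    simp only [Matrix.mul_smul, trace_smul, QAE.trace_mul_outer, smul_eq_mul,
      Complex.re_ofReal_mul]
  rw [hoverlap]
  refine sum_mul_le_sum_lt_of_antitone hpa hp0 (fun j => hQ.re_star_dotProduct_mulVec_nonneg _)
    (fun j => hQ.re_star_dotProduct_mulVec_le_one (by simpa using hψ j j)) ?_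
  simpa [htrace] using QAE.sum_re_star_dotProduct_mulVec_le_re_trace hQ hψ

/-- the optimal trash overlap is at most the sum of the d_A largest eigenvalues. -/
theorem stmt9 {A B : Type*} [Fintype A] [Fintype B] [DecidableEq A] [DecidableEq B]
    {k : ℕ} (p : Fin k → ℝ) (hpa : Antitone p) (hp0 : ∀ j, 0 ≤ p j) (hp1 : ∑ j, p j = 1)
    (ψ : Fin k → (A × B) → ℂ)
    (hψ : ∀ i j, star (ψ i) ⬝ᵥ ψ j = if i = j then 1 else 0)
    (ρAB : Matrix (A × B) (A × B) ℂ) (hρ : ρAB = ∑ j, (p j : ℂ) • QAE.outer (ψ j))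
    (U : Matrix (A × B) (A × B) ℂ) (hU : Uᴴ * U = 1 ∧ U * Uᴴ = 1)
    (b0 : B → ℂ) (hb0 : star b0 ⬝ᵥ b0 = 1) :
    ((((1 : Matrix A A ℂ) ⊗ₖ QAE.outer b0) * (U * ρAB * Uᴴ)).trace).re
      ≤ ∑ j ∈ Finset.univ.filter (fun j : Fin k => (j : ℕ) < Fintype.card A), p j :=
  stmt9_general p hpa hp0 ψ hψ ρAB hρ U hU b0 hb0
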